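/- Let A be a Schur ring over an infinite cyclic group ⟨z⟩. Then either every basic set of A is a singleton (A is the discrete Schur ring F[⟨z⟩]), or the basic sets of A are exactly the sets {z^i, z^{−i}} for i ∈ ℤ (A is the symmetric Schur ring). -/

import Mathlib

open scoped BigOperators

/-- A Schur ring over the group `G` with coefficients in the field `F`, presented by its
partition into finite nonempty basic sets. -/
structure SchurRing (F : Type) [Field F] [CharZero F] (G : Type) [Group G] [DecidableEq G] where
  /-- the basic sets -/
  parts : Set (Finset G)
  nonempty : ∀ C ∈ parts, C.Nonempty
  cover : ∀ g : G, ∃ C ∈ parts, g ∈ C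
  eq_or_disjoint : ∀ C ∈ parts, ∀ D ∈ parts, C = D ∨ Disjoint C D
  one_mem : ({1} : Finset G) ∈ parts
  inv_mem : ∀ C ∈ parts, C.image (·⁻¹) ∈ parts
  mul_mem : ∀ C ∈ parts, ∀ D ∈ parts, ∃ S : Finset (Finset G),
    (↑S : Set (Finset G)) ⊆ parts ∧ ∃ coef : Finset G → F,
      (∑ g ∈ C, MonoidAlgebra.single g (1 : F)) * (∑ g ∈ D, MonoidAlgebra.single g (1 : F))
        = ∑ E ∈ S, coef E • ∑ g ∈ E, MonoidAlgebra.single g (1 : F)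

/-- A subset of `G` is an `A`-set if it is a union of basic sets of `A`. -/
def SchurRing.IsASet {F : Type} [Field F] [CharZero F] {G : Type} [Group G] [DecidableEq G]
    (A : SchurRing F G) (X : Set G) : Prop :=
  ∃ 𝒮 : Set (Finset G), 𝒮 ⊆ A.parts ∧ X = ⋃ C ∈ 𝒮, (C : Set G)

/-!
Elements of a Schur ring have coefficients that are constant on basic sets. Reducing the
integral coefficients of `C̄ ^ p` modulo a prime `p` and using the Frobenius identity
`C̄ ^ p ≡ Σ_{c ∈ C} c ^ p` shows that in a torsion-free abelian group the basic set of `g ^ n`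
lies in `{c ^ n | c ∈ basic set of g}`. For a generator `z` of an infinite cyclic group this
only leaves room for the basic set of `z` to be `{z}` or `{z, z⁻¹}`. In the first case the
elements with singleton basic sets form a subgroup containing `z`, hence everything. In the
second case the basic set of `z ^ n` lies in `{z ^ n, z ^ (-n)}`; were it `{z ^ n}`, translating
the basic set of `z` by `z ^ n` would make `{z ^ (n + 1)}` basic as well, and then so would be
`{z} = {z ^ (n + 1)} {z ^ (-n)}`.
-/

open Finset

namespace MonoidAlgebra

variable {R S M : Type*}

variable (R) in
noncomputable def simpleQuantity [Semiring R] (C : Finset M) : MonoidAlgebra R M :=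
  ∑ g ∈ C, single g 1

theorem coeff_simpleQuantity [Semiring R] [DecidableEq M] (C : Finset M) (v : M) :
    (simpleQuantity R C).coeff v = if v ∈ C then 1 else 0 := by
  simp [simpleQuantity, coeff_sum, Finset.sum_apply', Finsupp.single_apply]

theorem mapRingHom_simpleQuantity [Monoid M] [Semiring R] [Semiring S] (f : R →+* S)
    (C : Finset M) : mapRingHom M f (simpleQuantity R C) = simpleQuantity S C := by
  simp [simpleQuantity]

theorem simpleQuantity_singleton_mul [LeftCancelMonoid M] [DecidableEq M] [Semiring R] (h : M)
    (D : Finset M) :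
    simpleQuantity R {h} * simpleQuantity R D = simpleQuantity R (D.image (h * ·)) := by
  simp [simpleQuantity, mul_sum, single_mul_single, sum_image (mul_right_injective h).injOn]

theorem simpleQuantity_pow_of_expChar [CommMonoid M] [DecidableEq M] [CommSemiring R] (p : ℕ)
    [ExpChar R p] (hinj : Function.Injective fun g : M ↦ g ^ p) (C : Finset M) :
    simpleQuantity R C ^ p = simpleQuantity R (C.image (· ^ p)) := by
  have : ExpChar (MonoidAlgebra R M) p :=
    expChar_of_injective_ringHom (f := singleOneRingHom) (fun _ _ h ↦ single_right_injective h) p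
  simp [simpleQuantity, sum_pow_char, single_pow, sum_image hinj.injOn]

end MonoidAlgebra

theorem isMulTorsionFree_of_forall_mem_zpowers {G : Type*} [Group G] {z : G}
    (hgen : ∀ g : G, g ∈ Subgroup.zpowers z) (hz : ¬IsOfFinOrder z) : IsMulTorsionFree G where
  pow_left_injective n hn g h hgh := by
    obtain ⟨i, rfl⟩ := Subgroup.mem_zpowers_iff.mp (hgen g)
    obtain ⟨j, rfl⟩ := Subgroup.mem_zpowers_iff.mp (hgen h)
    have := injective_zpow_iff_not_isOfFinOrder.mpr hz
      (by simpa only [← zpow_natCast, ← zpow_mul] using hgh : z ^ (i * n) = z ^ (j * n))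
    rw [mul_right_cancel₀ (Int.natCast_ne_zero.mpr hn) this]

namespace SchurRing

open MonoidAlgebra

variable {F : Type} [Field F] [CharZero F] {G : Type} [Group G] [DecidableEq G] (A : SchurRing F G)

noncomputable def toSubalgebra : Subalgebra F (MonoidAlgebra F G) :=
  Submodule.toSubalgebra (Submodule.span F (simpleQuantity F '' A.parts))
    (Submodule.subset_span ⟨{1}, A.one_mem, by simp [simpleQuantity, one_def]⟩)
    (fun x y hx hy ↦ by
      have hxy := Submodule.mul_mem_mul hx hy
      rw [Submodule.span_mul_span] at hxy
      refine Submodule.span_le.mpr ?_ hxy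
      rintro _ ⟨_, ⟨C, hC, rfl⟩, _, ⟨D, hD, rfl⟩, rfl⟩
      obtain ⟨S, hS, coef, hCD⟩ := A.mul_mem C hC D hD
      change simpleQuantity F C * simpleQuantity F D ∈ _
      rw [show simpleQuantity F C * simpleQuantity F D = _ from hCD]
      exact Submodule.sum_mem _ fun E hE ↦
        Submodule.smul_mem _ _ (Submodule.subset_span ⟨E, hS hE, rfl⟩))

theorem simpleQuantity_mem_toSubalgebra {C : Finset G} (hC : C ∈ A.parts) :
    simpleQuantity F C ∈ A.toSubalgebra :=
  Submodule.subset_span ⟨C, hC, rfl⟩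

theorem coeff_eq_of_mem_toSubalgebra {x : MonoidAlgebra F G} (hx : x ∈ A.toSubalgebra)
    {D : Finset G} (hD : D ∈ A.parts) {u v : G} (hu : u ∈ D) (hv : v ∈ D) :
    x.coeff u = x.coeff v := by
  induction hx using Submodule.span_induction with
  | mem y hy =>
    obtain ⟨C, hC, rfl⟩ := hy
    rcases A.eq_or_disjoint C hC D hD with rfl | hCD
    · simp [coeff_simpleQuantity, hu, hv]
    · simp [coeff_simpleQuantity, disjoint_right.mp hCD hu, disjoint_right.mp hCD hv]
  | zero => rfl
  | add _ _ _ _ hy hw => simp [coeff_add, hy, hw]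
  | smul _ _ _ hy => simp [hy]

noncomputable def basicSet (g : G) : Finset G := (A.cover g).choose

theorem basicSet_mem_parts (g : G) : A.basicSet g ∈ A.parts := (A.cover g).choose_spec.1

theorem mem_basicSet (g : G) : g ∈ A.basicSet g := (A.cover g).choose_spec.2

theorem basicSet_eq_of_mem {C : Finset G} (hC : C ∈ A.parts) {g : G} (hg : g ∈ C) :
    A.basicSet g = C :=
  (A.eq_or_disjoint _ (A.basicSet_mem_parts g) C hC).resolve_right
    fun h ↦ disjoint_left.mp h (A.mem_basicSet g) hg

theorem mem_basicSet_comm {g h : G} (hg : g ∈ A.basicSet h) : h ∈ A.basicSet g :=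
  A.basicSet_eq_of_mem (A.basicSet_mem_parts h) hg ▸ A.mem_basicSet h

theorem basicSet_one : A.basicSet 1 = {1} :=
  A.basicSet_eq_of_mem A.one_mem (mem_singleton_self 1)

theorem basicSet_inv (g : G) : A.basicSet g⁻¹ = (A.basicSet g).image (·⁻¹) :=
  A.basicSet_eq_of_mem (A.inv_mem _ (A.basicSet_mem_parts g))
    (mem_image_of_mem _ (A.mem_basicSet g))

theorem inv_mem_basicSet_inv {g h : G} (hg : g ∈ A.basicSet h) : g⁻¹ ∈ A.basicSet h⁻¹ := by
  rw [basicSet_inv]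
  exact mem_image_of_mem _ hg

theorem basicSet_subset_image_mul {h : G} (hh : {h} ∈ A.parts) {D : Finset G} (hD : D ∈ A.parts)
    {v : G} (hv : v ∈ D.image (h * ·)) : A.basicSet v ⊆ D.image (h * ·) := by
  intro u hu
  have hcoeff := A.coeff_eq_of_mem_toSubalgebra
    (Subalgebra.mul_mem _ (A.simpleQuantity_mem_toSubalgebra hh)
      (A.simpleQuantity_mem_toSubalgebra hD))
    (A.basicSet_mem_parts v) hu (A.mem_basicSet v)
  rw [simpleQuantity_singleton_mul, coeff_simpleQuantity, coeff_simpleQuantity, if_pos hv] at hcoeff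
  exact of_not_not fun hu' ↦ zero_ne_one (by rwa [if_neg hu'] at hcoeff)

theorem singleton_mem_parts_of_basicSet_subset {g : G} (hg : A.basicSet g ⊆ {g}) :
    {g} ∈ A.parts :=
  Subset.antisymm hg (singleton_subset_iff.mpr (A.mem_basicSet g)) ▸ A.basicSet_mem_parts g

def thinRadical : Subgroup G where
  carrier := {g | ({g} : Finset G) ∈ A.parts}
  one_mem' := A.one_mem
  mul_mem' {a b} ha hb := A.singleton_mem_parts_of_basicSet_subset <| by
    simpa using A.basicSet_subset_image_mul ha hb (v := a * b) (by simp)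
  inv_mem' {g} hg := by simpa using A.inv_mem _ hg

theorem basicSet_eq_singleton {g : G} (hg : g ∈ A.thinRadical) : A.basicSet g = {g} :=
  A.basicSet_eq_of_mem hg (mem_singleton_self g)

theorem basicSet_eq_pair_of_subset {g : G} (hsub : A.basicSet g ⊆ {g, g⁻¹})
    (hg : g ∉ A.thinRadical) : A.basicSet g = {g, g⁻¹} := by
  refine Subset.antisymm hsub (insert_subset (A.mem_basicSet g) (singleton_subset_iff.mpr ?_))
  by_contra hinv
  refine hg (A.singleton_mem_parts_of_basicSet_subset fun u hu ↦ ?_)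
  rcases mem_insert.mp (hsub hu) with rfl | hu'
  · exact mem_singleton_self u
  · exact absurd (mem_singleton.mp hu' ▸ hu) hinv

section TorsionFree

variable [IsMulCommutative G] [IsMulTorsionFree G]

open scoped IsMulCommutative

theorem basicSet_pow_subset_of_prime {p : ℕ} (hp : p.Prime) (g : G) :
    A.basicSet (g ^ p) ⊆ (A.basicSet g).image (· ^ p) := by
  have := Fact.mk hp
  set C := A.basicSet g
  -- `N` has natural coefficients: over `F` they are constant on basic sets, while modulo `p`
  -- they form the indicator of `C ^ (p)` by the Frobenius identity.
  set N := simpleQuantity ℕ C ^ p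
  have hF (v : G) : (N.coeff v : F) = (simpleQuantity F C ^ p).coeff v := by
    rw [← mapRingHom_simpleQuantity (Nat.castRingHom F), ← map_pow, coeff_mapRingHom]
    rfl
  have hZ (v : G) : (N.coeff v : ZMod p) = if v ∈ C.image (· ^ p) then 1 else 0 := by
    rw [← coeff_simpleQuantity, ← simpleQuantity_pow_of_expChar p
      (IsMulTorsionFree.pow_left_injective hp.ne_zero), ← mapRingHom_simpleQuantity
      (Nat.castRingHom _), ← map_pow, coeff_mapRingHom]
    rfl
  intro y hy
  have hN : N.coeff y = N.coeff (g ^ p) := by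
    have := A.coeff_eq_of_mem_toSubalgebra
      (Subalgebra.pow_mem _ (A.simpleQuantity_mem_toSubalgebra (A.basicSet_mem_parts g)) p)
      (A.basicSet_mem_parts _) hy (A.mem_basicSet _)
    exact_mod_cast (hF y).trans (this.trans (hF _).symm)
  have hy' := hZ y
  rw [hN, hZ, if_pos (mem_image_of_mem _ (A.mem_basicSet g))] at hy'
  exact of_not_not fun h ↦ one_ne_zero (by rwa [if_neg h] at hy')

theorem basicSet_pow_subset {n : ℕ} (hn : n ≠ 0) (g : G) :
    A.basicSet (g ^ n) ⊆ (A.basicSet g).image (· ^ n) := by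
  induction n using Nat.recOnMul generalizing g with
  | zero => exact absurd rfl hn
  | one => simp
  | prime p hp => exact A.basicSet_pow_subset_of_prime hp g
  | mul a b iha ihb =>
    rw [pow_mul]
    calc A.basicSet ((g ^ a) ^ b) ⊆ (A.basicSet (g ^ a)).image (· ^ b) :=
          ihb (right_ne_zero_of_mul hn) _
      _ ⊆ ((A.basicSet g).image (· ^ a)).image (· ^ b) :=
          image_subset_image (iha (left_ne_zero_of_mul hn) g)
      _ = (A.basicSet g).image (· ^ (a * b)) := by simp [image_image, Function.comp_def, pow_mul]

variable {z : G}

theorem natCast_dvd_of_zpow_mem_basicSet_pow (hgen : ∀ g : G, g ∈ Subgroup.zpowers z)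
    (hz : ¬IsOfFinOrder z) {n : ℕ} (hn : n ≠ 0) {k : ℤ}
    (hk : z ^ k ∈ A.basicSet (z ^ n)) : (n : ℤ) ∣ k := by
  obtain ⟨c, -, hc⟩ := mem_image.mp (A.basicSet_pow_subset hn z hk)
  obtain ⟨e, rfl⟩ := Subgroup.mem_zpowers_iff.mp (hgen c)
  rw [← zpow_natCast, ← zpow_mul] at hc
  exact ⟨e, by rw [← injective_zpow_iff_not_isOfFinOrder.mpr hz hc, mul_comm]⟩

theorem basicSet_subset_pair (hgen : ∀ g : G, g ∈ Subgroup.zpowers z) (hz : ¬IsOfFinOrder z) :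
    A.basicSet z ⊆ {z, z⁻¹} := by
  intro g hg
  have hg1 : g ≠ 1 := by
    rintro rfl
    have := A.mem_basicSet_comm hg
    rw [basicSet_one, mem_singleton] at this
    exact hz (this ▸ IsOfFinOrder.one)
  obtain ⟨m, rfl⟩ := Subgroup.mem_zpowers_iff.mp (hgen g)
  rcases Int.eq_nat_or_neg m with ⟨n, rfl | rfl⟩ <;>
    have hn : n ≠ 0 := by rintro rfl; simp at hg1
  · have h := A.natCast_dvd_of_zpow_mem_basicSet_pow hgen hz hn (k := 1)
      (by simpa using A.mem_basicSet_comm hg)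
    obtain rfl : n = 1 := by exact_mod_cast Int.eq_one_of_dvd_one (by positivity) h
    simp
  · have h := A.natCast_dvd_of_zpow_mem_basicSet_pow hgen hz hn (k := -1)
      (by simpa using A.mem_basicSet_comm (A.inv_mem_basicSet_inv hg))
    obtain rfl : n = 1 := by exact_mod_cast Int.eq_one_of_dvd_one (by positivity) (dvd_neg.mp h)
    simp

theorem pow_succ_mem_thinRadical (hz : ¬IsOfFinOrder z) (hpair : A.basicSet z = {z, z⁻¹})
    {n : ℕ} (hn : n ≠ 0) (hmem : z ^ n ∈ A.thinRadical) : z ^ (n + 1) ∈ A.thinRadical := by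
  refine A.singleton_mem_parts_of_basicSet_subset fun u hu ↦ ?_
  -- `z ^ n • {z, z⁻¹}` and `{z, z⁻¹} ^ (n + 1)` meet only in `z ^ (n + 1)`
  have h₁ := A.basicSet_subset_image_mul hmem (A.basicSet_mem_parts z) (v := z ^ (n + 1))
    (by simp [hpair, pow_succ])
  have h₂ := A.basicSet_pow_subset (Nat.add_one_ne_zero n) z
  rw [hpair] at h₁ h₂
  have hu₁ := h₁ hu
  have hu₂ := h₂ hu
  simp only [image_insert, image_singleton, mem_insert, mem_singleton] at hu₁ hu₂ ⊢
  rcases hu₂ with rfl | rfl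
  · rfl
  · have e₁ : z⁻¹ ^ (n + 1) = z ^ (-((n : ℤ) + 1)) := by
      rw [inv_pow, zpow_neg, ← Nat.cast_succ, zpow_natCast]
    have e₂ : z ^ n * z = z ^ ((n : ℤ) + 1) := by rw [zpow_add_one, zpow_natCast]
    have e₃ : z ^ n * z⁻¹ = z ^ ((n : ℤ) - 1) := by rw [zpow_sub_one, zpow_natCast]
    rw [e₁, e₂, e₃] at hu₁
    rcases hu₁ with h | h <;> have := injective_zpow_iff_not_isOfFinOrder.mpr hz h <;> omega

theorem pow_notMem_thinRadical (hz : ¬IsOfFinOrder z) (hpair : A.basicSet z = {z, z⁻¹})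
    (hzt : z ∉ A.thinRadical) {n : ℕ} (hn : n ≠ 0) : z ^ n ∉ A.thinRadical := by
  intro hmem
  apply hzt
  simpa [pow_succ] using A.thinRadical.mul_mem (A.thinRadical.inv_mem hmem)
    (A.pow_succ_mem_thinRadical hz hpair hn hmem)

theorem basicSet_zpow (hgen : ∀ g : G, g ∈ Subgroup.zpowers z) (hz : ¬IsOfFinOrder z)
    (hzt : z ∉ A.thinRadical) (i : ℤ) : A.basicSet (z ^ i) = {z ^ i, z ^ (-i)} := by
  have hpair := A.basicSet_eq_pair_of_subset (A.basicSet_subset_pair hgen hz) hzt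
  have hnat (n : ℕ) : A.basicSet (z ^ n) = {z ^ n, (z ^ n)⁻¹} := by
    rcases eq_or_ne n 0 with rfl | hn
    · simp [basicSet_one]
    · refine A.basicSet_eq_pair_of_subset ?_ (A.pow_notMem_thinRadical hz hpair hzt hn)
      simpa [hpair, inv_pow] using A.basicSet_pow_subset hn z
  rcases Int.eq_nat_or_neg i with ⟨n, rfl | rfl⟩
  · simpa using hnat n
  · rw [zpow_neg, basicSet_inv, zpow_natCast, hnat n]
    simp [pair_comm]

end TorsionFree

end SchurRing

/-- A Schur ring over an infinite cyclic group `⟨z⟩` is either discrete (all basic sets are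
singletons) or symmetric (the basic sets are exactly the sets `{z^i, z^(-i)}`, `i ∈ ℤ`). -/
theorem stmt_18 (F : Type) [Field F] [CharZero F] (G : Type) [Group G] [DecidableEq G]
    (z : G) (hgen : ∀ g : G, g ∈ Subgroup.zpowers z) (hinf : ¬ IsOfFinOrder z)
    (A : SchurRing F G) :
    (∀ C ∈ A.parts, ∃ g : G, C = {g}) ∨
    A.parts = {C : Finset G | ∃ i : ℤ, C = {z ^ i, z ^ (-i)}} := by
  have : IsCyclic G := ⟨z, fun g ↦ Subgroup.mem_zpowers_iff.mp (hgen g)⟩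
  have := isMulTorsionFree_of_forall_mem_zpowers hgen hinf
  by_cases hzt : z ∈ A.thinRadical
  · left
    intro C hC
    obtain ⟨g, hg⟩ := A.nonempty C hC
    have hg' : g ∈ A.thinRadical := Subgroup.zpowers_le.mpr hzt (hgen g)
    exact ⟨g, by rw [← A.basicSet_eq_of_mem hC hg, A.basicSet_eq_singleton hg']⟩
  · right
    ext C
    constructor
    · intro hC
      obtain ⟨g, hg⟩ := A.nonempty C hC
      obtain ⟨i, rfl⟩ := Subgroup.mem_zpowers_iff.mp (hgen g)
      exact ⟨i, by rw [← A.basicSet_eq_of_mem hC hg, A.basicSet_zpow hgen hinf hzt]⟩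
    · rintro ⟨i, rfl⟩
      exact A.basicSet_zpow hgen hinf hzt i ▸ A.basicSet_mem_parts _
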